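/- Let Λ be a proper Λ-sequence. A function f : [0,1] → ℝ is continuous, of bounded Λ-variation and continuous in Λ-variation if and only if for every ε > 0 there exists a real polynomial p such that ‖f − p‖_Λ < ε (p viewed as a function on [0,1]); that is, the space CΛBV_c is the closure of the space of polynomials in the ‖·‖_Λ norm. -/

import Mathlib

open Filter Set MeasureTheory
open scoped ENNReal Topology

/-- `l` is a Λ-sequence (indexed from 0, so `l 0` plays the role of `λ₁`):
a nondecreasing sequence of positive reals whose reciprocals have divergent sum. -/
def IsLambdaSeq (l : ℕ → ℝ) : Prop :=
  Monotone l ∧ (∀ n, 0 < l n) ∧ ¬ Summable (fun n => 1 / l n)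

/-- A proper Λ-sequence: additionally `λₙ → ∞`. -/
def IsProperLambdaSeq (l : ℕ → ℝ) : Prop :=
  IsLambdaSeq l ∧ Tendsto l atTop atTop

/-- The Λ-variation of `f` computed over partition points taken from `K`:
the supremum of `∑ⱼ |f(x_{j+1}) - f(x_j)| / λ_{β(j)}` over all `m`, all nondecreasing
tuples `x₁ ≤ … ≤ x_{m+1}` of points of `K` and all permutations `β` of the gaps. -/
noncomputable def lamVarOn (l : ℕ → ℝ) (f : ℝ → ℝ) (K : Set ℝ) : ℝ≥0∞ :=
  ⨆ (m : ℕ) (x : Fin (m + 1) → ℝ) (_ : Monotone x) (_ : ∀ j, x j ∈ K)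
    (β : Equiv.Perm (Fin m)),
    ∑ j : Fin m, ENNReal.ofReal (|f (x j.succ) - f (x j.castSucc)| / l (β j))

/-- The Λ-variation of `f : [0,1] → ℝ`. -/
noncomputable def lamVar (l : ℕ → ℝ) (f : ℝ → ℝ) : ℝ≥0∞ :=
  lamVarOn l f (Set.Icc 0 1)

/-- The norm `‖f‖_Λ = V_Λ(f) + |f 0|` (valued in `[0,∞]`). -/
noncomputable def lamNorm (l : ℕ → ℝ) (f : ℝ → ℝ) : ℝ≥0∞ :=
  lamVar l f + ENNReal.ofReal |f 0|

/-- `f` is continuous in Λ-variation: `V_{Λ_(m)}(f) → 0` as `m → ∞`. -/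
def ContInLamVar (l : ℕ → ℝ) (f : ℝ → ℝ) : Prop :=
  Tendsto (fun m => lamVar (fun n => l (n + m)) f) atTop (𝓝 0)

/-- The restricted Λ-variation `V_{Λ,δ}(f)`: the supremum of `∑ⱼ |f(bⱼ) - f(aⱼ)| / λⱼ`
over all finite sequences of nonoverlapping closed subintervals `[aⱼ, bⱼ]` of `[0,1]`
of length at most `δ`, listed in any order. -/
noncomputable def lamVarDelta (l : ℕ → ℝ) (δ : ℝ) (f : ℝ → ℝ) : ℝ≥0∞ :=
  ⨆ (k : ℕ) (a : Fin k → ℝ) (b : Fin k → ℝ)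
    (_ : ∀ j, 0 ≤ a j ∧ a j ≤ b j ∧ b j ≤ 1 ∧ b j - a j ≤ δ)
    (_ : ∀ i j, i ≠ j → b i ≤ a j ∨ b j ≤ a i),
    ∑ j : Fin k, ENNReal.ofReal (|f (b j) - f (a j)| / l j)

/-- The `n`-th Bernstein polynomial of `f : [0,1] → ℝ`. -/
noncomputable def bern (n : ℕ) (f : ℝ → ℝ) (x : ℝ) : ℝ :=
  ∑ k ∈ Finset.range (n + 1),
    f ((k : ℝ) / n) * (n.choose k : ℝ) * x ^ k * (1 - x) ^ (n - k)

/-- The `n`-th Kantorovich polynomial of `f : [0,1] → ℝ`. -/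
noncomputable def kant (n : ℕ) (f : ℝ → ℝ) (x : ℝ) : ℝ :=
  ∑ k ∈ Finset.range (n + 1),
    (n.choose k : ℝ) * x ^ k * (1 - x) ^ (n - k) *
      ((n + 1) * ∫ t in ((k : ℝ) / (n + 1))..(((k : ℝ) + 1) / (n + 1)), f t)

/-!
Polynomials are Lipschitz on `[0,1]`, and a `K`-Lipschitz function has `Λ_(M)`-variation at
most `K / λ_M` (the gaps of a partition add up to at most `1`); since
`|h z| ≤ λ₀ V_Λ(h) + |h 0|` on `[0,1]`, a `‖·‖_Λ`-limit of polynomials is a uniform limit, hence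
continuous, of bounded `Λ`-variation and continuous in `Λ`-variation.

Conversely, let `f ∈ CΛBV_c` and choose `M` with `V_{Λ_(M)}(f)` small. Extend `f` constantly
outside `[0,1]` and take the Steklov average `g z = δ⁻¹ ∫₀^δ f (z + t) dt`. For small `δ` it is
uniformly close to `f`, and, being an average of translates of `f`, it satisfies
`V_{Λ_(M)}(g) ≤ V_{Λ_(M)}(f)`. The gaps weighted by `λ₀, …, λ_{M-1}` contribute at most
`2 sup |f - g| ∑_{i<M} 1/λ_i` to `V_Λ(f - g)` and the others at most
`V_{Λ_(M)}(f) + V_{Λ_(M)}(g)`, so `‖f - g‖_Λ` is small. Finally `g` is `C¹`: approximating `g'`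
uniformly by a polynomial and integrating gives a polynomial `q` such that `g - q` has a small
Lipschitz constant, hence a small `Λ`-norm.
-/

open scoped NNReal

section LamVar

variable (l : ℕ → ℝ) (f : ℝ → ℝ)

theorem le_lamVarOn {K : Set ℝ} {m : ℕ} {x : Fin (m + 1) → ℝ} (hx : Monotone x)
    (hxK : ∀ j, x j ∈ K) (β : Equiv.Perm (Fin m)) :
    ∑ j : Fin m, ENNReal.ofReal (|f (x j.succ) - f (x j.castSucc)| / l (β j)) ≤
      lamVarOn l f K :=
  le_iSup_of_le m <| le_iSup_of_le x <| le_iSup_of_le hx <| le_iSup_of_le hxK <|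
    le_iSup_of_le β le_rfl

theorem lamVarOn_le {K : Set ℝ} {C : ℝ≥0∞}
    (h : ∀ (m : ℕ) (x : Fin (m + 1) → ℝ), Monotone x → (∀ j, x j ∈ K) →
      ∀ β : Equiv.Perm (Fin m),
        ∑ j : Fin m, ENNReal.ofReal (|f (x j.succ) - f (x j.castSucc)| / l (β j)) ≤ C) :
    lamVarOn l f K ≤ C :=
  iSup_le fun m => iSup_le fun x => iSup_le fun hx => iSup_le fun hxK =>
    iSup_le fun β => h m x hx hxK β

theorem lamVarOn_univ_IccExtend_le :
    lamVarOn l (IccExtend zero_le_one (f ∘ Subtype.val)) univ ≤ lamVar l f :=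
  lamVarOn_le l _ fun _ x hx _ β =>
    le_lamVarOn l f (x := fun j => (projIcc 0 1 zero_le_one (x j) : ℝ))
      (fun _ _ hab => monotone_projIcc _ (hx hab)) (fun j => (projIcc 0 1 _ (x j)).2) β

variable {l f} {g : ℝ → ℝ}

theorem lamVar_le_of_abs_sub_le (hl : ∀ n, 0 ≤ l n)
    (h : ∀ x ∈ Icc (0 : ℝ) 1, ∀ y ∈ Icc (0 : ℝ) 1, |g y - g x| ≤ |f y - f x|) :
    lamVar l g ≤ lamVar l f :=
  lamVarOn_le l g fun _ _ hx hxK β => (Finset.sum_le_sum fun _ _ =>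
    ENNReal.ofReal_le_ofReal (div_le_div_of_nonneg_right (h _ (hxK _) _ (hxK _)) (hl _))).trans
      (le_lamVarOn l f hx hxK β)

theorem lamVar_add_le (hl : ∀ n, 0 ≤ l n) :
    lamVar l (fun x => f x + g x) ≤ lamVar l f + lamVar l g := by
  refine lamVarOn_le l _ fun m x hx hxK β => ?_
  refine le_trans ?_ (add_le_add (le_lamVarOn l f hx hxK β) (le_lamVarOn l g hx hxK β))
  rw [← Finset.sum_add_distrib]
  refine Finset.sum_le_sum fun j _ => ?_
  rw [← ENNReal.ofReal_add (by have := hl (β j); positivity) (by have := hl (β j); positivity),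
    ← add_div]
  refine ENNReal.ofReal_le_ofReal (div_le_div_of_nonneg_right ?_ (hl _))
  calc |f (x j.succ) + g (x j.succ) - (f (x j.castSucc) + g (x j.castSucc))|
      = |(f (x j.succ) - f (x j.castSucc)) + (g (x j.succ) - g (x j.castSucc))| := by ring_nf
    _ ≤ _ := abs_add_le _ _

theorem lamVar_sub_le (hl : ∀ n, 0 ≤ l n) :
    lamVar l (fun x => f x - g x) ≤ lamVar l f + lamVar l g := by
  have hneg : lamVar l (fun x => -g x) ≤ lamVar l g :=
    lamVar_le_of_abs_sub_le hl fun x _ y _ => by rw [neg_sub_neg, abs_sub_comm]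
  calc lamVar l (fun x => f x - g x) = lamVar l (fun x => f x + -g x) := by
        simp only [sub_eq_add_neg]
    _ ≤ lamVar l f + lamVar l (fun x => -g x) := lamVar_add_le (g := fun x => -g x) hl
    _ ≤ lamVar l f + lamVar l g := by gcongr

theorem lamNorm_add_le (hl : ∀ n, 0 ≤ l n) :
    lamNorm l (fun x => f x + g x) ≤ lamNorm l f + lamNorm l g := by
  unfold lamNorm
  calc lamVar l (fun x => f x + g x) + ENNReal.ofReal |f 0 + g 0|
      ≤ lamVar l f + lamVar l g + (ENNReal.ofReal |f 0| + ENNReal.ofReal |g 0|) :=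
        add_le_add (lamVar_add_le hl)
          ((ENNReal.ofReal_le_ofReal (abs_add_le _ _)).trans ENNReal.ofReal_add_le)
    _ = _ := add_add_add_comm _ _ _ _

theorem lamNorm_sub_le_add {h : ℝ → ℝ} (hl : ∀ n, 0 ≤ l n) :
    lamNorm l (fun x => f x - h x) ≤
      lamNorm l (fun x => f x - g x) + lamNorm l (fun x => g x - h x) :=
  calc lamNorm l (fun x => f x - h x)
      = lamNorm l (fun x => (f x - g x) + (g x - h x)) := by simp_rw [sub_add_sub_cancel]
    _ ≤ _ := lamNorm_add_le (f := fun x => f x - g x) (g := fun x => g x - h x) hl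

theorem lamVar_anti {l' : ℕ → ℝ} (hl : ∀ n, 0 < l n) (h : ∀ n, l n ≤ l' n) :
    lamVar l' f ≤ lamVar l f :=
  lamVarOn_le l' f fun _ _ hx hxK β => (Finset.sum_le_sum fun _ _ =>
    ENNReal.ofReal_le_ofReal (div_le_div_of_nonneg_left (abs_nonneg _) (hl _) (h _))).trans
      (le_lamVarOn l f hx hxK β)

theorem lamVar_shift_le (hl : ∀ n, 0 < l n) (hlm : Monotone l) (M : ℕ) :
    lamVar (fun n => l (n + M)) f ≤ lamVar l f :=
  lamVar_anti hl fun n => hlm (Nat.le_add_right n M)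

theorem abs_sub_div_le_lamVar {x y : ℝ} (hx : x ∈ Icc (0 : ℝ) 1) (hy : y ∈ Icc (0 : ℝ) 1)
    (hxy : x ≤ y) : ENNReal.ofReal (|f y - f x| / l 0) ≤ lamVar l f := by
  have hmono : Monotone ![x, y] := by
    intro a b hab
    fin_cases a <;> fin_cases b <;> simp_all
  simpa [lamVar] using
    le_lamVarOn l f hmono (by simpa [Fin.forall_fin_two] using ⟨hx, hy⟩) (Equiv.refl _)

theorem abs_lt_of_lamNorm_lt (hl0 : 0 < l 0) {C : ℝ} (h : lamNorm l f < ENNReal.ofReal C)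
    {z : ℝ} (hz : z ∈ Icc (0 : ℝ) 1) : |f z| < (l 0 + 1) * C := by
  have hvar :=
    ((abs_sub_div_le_lamVar ⟨le_rfl, zero_le_one⟩ hz hz.1).trans le_self_add).trans_lt h
  have h0 : ENNReal.ofReal |f 0| < ENNReal.ofReal C := le_add_self.trans_lt h
  rw [ENNReal.ofReal_lt_ofReal_iff', div_lt_iff₀ hl0] at hvar
  rw [ENNReal.ofReal_lt_ofReal_iff'] at h0
  calc |f z| ≤ |f z - f 0| + |f 0| := by linarith [abs_sub_abs_le_abs_sub (f z) (f 0)]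
    _ < C * l 0 + C := add_lt_add hvar.1 h0.1
    _ = (l 0 + 1) * C := by ring

theorem Fin.sum_succ_sub_castSucc {m : ℕ} (x : Fin (m + 1) → ℝ) :
    ∑ j : Fin m, (x j.succ - x j.castSucc) = x (Fin.last m) - x 0 := by
  induction m with
  | zero => simp
  | succ m ih =>
    rw [Fin.sum_univ_castSucc]
    simp only [Fin.succ_castSucc]
    rw [ih fun j => x j.castSucc, Fin.succ_last, Fin.castSucc_zero]
    ring

theorem lamVar_le_of_lipschitzOnWith (hl0 : 0 < l 0) (hlm : Monotone l) {K : ℝ≥0}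
    (hf : LipschitzOnWith K f (Icc 0 1)) : lamVar l f ≤ ENNReal.ofReal (K / l 0) := by
  refine lamVarOn_le l f fun m x hx hxK β => ?_
  have hgap : ∀ j : Fin m, 0 ≤ x j.succ - x j.castSucc := fun j =>
    sub_nonneg.2 (hx Fin.castSucc_lt_succ.le)
  have hterm : ∀ j : Fin m, |f (x j.succ) - f (x j.castSucc)| / l (β j) ≤
      K * (x j.succ - x j.castSucc) / l 0 := by
    intro j
    have hlip := hf.dist_le_mul _ (hxK j.succ) _ (hxK j.castSucc)
    rw [Real.dist_eq, Real.dist_eq, abs_of_nonneg (hgap j)] at hlip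
    exact div_le_div₀ (by have := hgap j; positivity) hlip hl0 (hlm (Nat.zero_le _))
  have htotal : x (Fin.last m) - x 0 ≤ 1 := by
    linarith [(hxK (Fin.last m)).2, (hxK 0).1]
  calc ∑ j : Fin m, ENNReal.ofReal (|f (x j.succ) - f (x j.castSucc)| / l (β j))
      ≤ ∑ j : Fin m, ENNReal.ofReal (K * (x j.succ - x j.castSucc) / l 0) :=
        Finset.sum_le_sum fun j _ => ENNReal.ofReal_le_ofReal (hterm j)
    _ = ENNReal.ofReal (∑ j : Fin m, K * (x j.succ - x j.castSucc) / l 0) :=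
        (ENNReal.ofReal_sum_of_nonneg fun j _ =>
          div_nonneg (mul_nonneg K.2 (hgap j)) hl0.le).symm
    _ = ENNReal.ofReal (K * (x (Fin.last m) - x 0) / l 0) := by
        rw [← Finset.sum_div, ← Finset.mul_sum, Fin.sum_succ_sub_castSucc]
    _ ≤ ENNReal.ofReal (K / l 0) := by
        gcongr
        exact mul_le_of_le_one_right K.2 htotal

theorem lamVar_shift_le_of_lipschitzOnWith {p : ℝ → ℝ} (hl : ∀ n, 0 < l n) (hlm : Monotone l)
    {K : ℝ≥0} (hp : LipschitzOnWith K p (Icc 0 1)) (M : ℕ) :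
    lamVar (fun n => l (n + M)) f ≤
      lamVar l (fun x => f x - p x) + ENNReal.ofReal (K / l M) :=
  calc lamVar (fun n => l (n + M)) f
      = lamVar (fun n => l (n + M)) (fun x => (f x - p x) + p x) := by
        simp only [sub_add_cancel]
    _ ≤ lamVar (fun n => l (n + M)) (fun x => f x - p x) + lamVar (fun n => l (n + M)) p :=
        lamVar_add_le (f := fun x => f x - p x) (g := p) fun n => (hl _).le
    _ ≤ lamVar l (fun x => f x - p x) + ENNReal.ofReal (K / l (0 + M)) :=
        add_le_add (lamVar_shift_le hl hlm M)
          (lamVar_le_of_lipschitzOnWith (l := fun n => l (n + M)) (hl _)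
            (fun _ _ h => hlm (Nat.add_le_add_right h M)) hp)
    _ = lamVar l (fun x => f x - p x) + ENNReal.ofReal (K / l M) := by rw [zero_add]

theorem Equiv.Perm.exists_add_eq {m : ℕ} (β : Equiv.Perm (Fin m)) (M : ℕ) :
    ∃ β' : Equiv.Perm (Fin m), ∀ j, M ≤ (β j : ℕ) → (β' j : ℕ) + M = β j := by
  classical
  let e : {j : Fin m // M ≤ (β j : ℕ)} → Fin m := fun j => ⟨β j.1 - M, by omega⟩
  have he : Function.Injective e := fun a b hab => by
    have h := congrArg Fin.val hab
    simp only [e] at h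
    exact Subtype.ext (β.injective (Fin.ext (by have := a.2; have := b.2; omega)))
  refine ⟨(Equiv.ofInjective e he).extendSubtype, fun j hj => ?_⟩
  rw [Equiv.extendSubtype_apply_of_mem _ j hj]
  simp only [Equiv.ofInjective_apply, e]
  omega

theorem lamVar_le_sum_add_lamVar_shift (hl : ∀ n, 0 ≤ l n) {B : ℝ}
    (hB : ∀ x ∈ Icc (0 : ℝ) 1, |f x| ≤ B) (M : ℕ) :
    lamVar l f ≤
      ENNReal.ofReal (∑ i ∈ Finset.range M, 2 * B / l i) + lamVar (fun n => l (n + M)) f := by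
  classical
  refine lamVarOn_le l f fun m x hx hxK β => ?_
  rw [← Finset.sum_filter_add_sum_filter_not Finset.univ fun j => (β j : ℕ) < M]
  gcongr
  · calc ∑ j ∈ Finset.univ with (β j : ℕ) < M,
          ENNReal.ofReal (|f (x j.succ) - f (x j.castSucc)| / l (β j))
        ≤ ∑ j ∈ Finset.univ with (β j : ℕ) < M, ENNReal.ofReal (2 * B / l (β j)) := by
          refine Finset.sum_le_sum fun j _ => ENNReal.ofReal_le_ofReal ?_
          refine div_le_div_of_nonneg_right ?_ (hl _)
          linarith [abs_sub (f (x j.succ)) (f (x j.castSucc)), hB _ (hxK j.succ),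
            hB _ (hxK j.castSucc)]
      _ = ∑ i ∈ (Finset.univ.filter fun j => (β j : ℕ) < M).image fun j => (β j : ℕ),
            ENNReal.ofReal (2 * B / l i) := by
          rw [Finset.sum_image fun a _ b _ hab => β.injective (Fin.ext hab)]
      _ ≤ ∑ i ∈ Finset.range M, ENNReal.ofReal (2 * B / l i) :=
          Finset.sum_le_sum_of_subset fun i hi => by
            obtain ⟨j, hj, rfl⟩ := Finset.mem_image.1 hi
            exact Finset.mem_range.2 (Finset.mem_filter.1 hj).2
      _ = ENNReal.ofReal (∑ i ∈ Finset.range M, 2 * B / l i) := by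
          have hB0 : 0 ≤ B := (abs_nonneg _).trans (hB 0 ⟨le_rfl, zero_le_one⟩)
          exact (ENNReal.ofReal_sum_of_nonneg fun i _ => by have := hl i; positivity).symm
  · obtain ⟨β', hβ'⟩ := β.exists_add_eq M
    calc ∑ j ∈ Finset.univ with ¬(β j : ℕ) < M,
          ENNReal.ofReal (|f (x j.succ) - f (x j.castSucc)| / l (β j))
        = ∑ j ∈ Finset.univ with ¬(β j : ℕ) < M,
            ENNReal.ofReal (|f (x j.succ) - f (x j.castSucc)| / l (β' j + M)) :=
          Finset.sum_congr rfl fun j hj => by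
            rw [hβ' j (not_lt.1 (Finset.mem_filter.1 hj).2)]
      _ ≤ ∑ j : Fin m, ENNReal.ofReal (|f (x j.succ) - f (x j.castSucc)| / l (β' j + M)) :=
          Finset.sum_le_sum_of_subset (Finset.subset_univ _)
      _ ≤ lamVar (fun n => l (n + M)) f := le_lamVarOn _ f hx hxK β'

theorem lamNorm_sub_le_of_abs_sub_le (hl : ∀ n, 0 ≤ l n) {ω : ℝ}
    (hfg : ∀ x ∈ Icc (0 : ℝ) 1, |f x - g x| ≤ ω) (M : ℕ) :
    lamNorm l (fun x => f x - g x) ≤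
      ENNReal.ofReal (ω * (2 * ∑ i ∈ Finset.range M, 1 / l i + 1)) +
        (lamVar (fun n => l (n + M)) f + lamVar (fun n => l (n + M)) g) := by
  have hω : 0 ≤ ω := (abs_nonneg _).trans (hfg 0 ⟨le_rfl, zero_le_one⟩)
  have hS : 0 ≤ ω * (2 * ∑ i ∈ Finset.range M, 1 / l i) :=
    mul_nonneg hω (mul_nonneg zero_le_two (Finset.sum_nonneg fun i _ => one_div_nonneg.2 (hl i)))
  have hsum : ∑ i ∈ Finset.range M, 2 * ω / l i = ω * (2 * ∑ i ∈ Finset.range M, 1 / l i) := by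
    rw [Finset.mul_sum, Finset.mul_sum]
    exact Finset.sum_congr rfl fun i _ => by ring
  calc lamNorm l (fun x => f x - g x)
      ≤ ENNReal.ofReal (∑ i ∈ Finset.range M, 2 * ω / l i) +
          lamVar (fun n => l (n + M)) (fun x => f x - g x) + ENNReal.ofReal ω :=
        add_le_add (lamVar_le_sum_add_lamVar_shift hl hfg M)
          (ENNReal.ofReal_le_ofReal (hfg 0 ⟨le_rfl, zero_le_one⟩))
    _ ≤ ENNReal.ofReal (ω * (2 * ∑ i ∈ Finset.range M, 1 / l i)) +
          (lamVar (fun n => l (n + M)) f + lamVar (fun n => l (n + M)) g) +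
            ENNReal.ofReal ω := by
        rw [hsum]
        gcongr
        exact lamVar_sub_le fun n => hl _
    _ = _ := by rw [add_right_comm, ← ENNReal.ofReal_add hS hω, mul_add_one]

end LamVar

noncomputable def steklov (δ : ℝ) (F : ℝ → ℝ) (z : ℝ) : ℝ :=
  (∫ t in (0 : ℝ)..δ, F (z + t)) / δ

section Steklov

variable {F : ℝ → ℝ} {δ : ℝ}

theorem steklov_eq_integral_sub (hF : Continuous F) (z : ℝ) :
    steklov δ F z = ((∫ t in (0 : ℝ)..z + δ, F t) - ∫ t in (0 : ℝ)..z, F t) / δ := by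
  rw [steklov, intervalIntegral.integral_comp_add_left, add_zero,
    intervalIntegral.integral_interval_sub_left (hF.intervalIntegrable _ _)
      (hF.intervalIntegrable _ _)]

theorem hasDerivAt_steklov (hF : Continuous F) (z : ℝ) :
    HasDerivAt (steklov δ F) ((F (z + δ) - F z) / δ) z := by
  have hG : ∀ y, HasDerivAt (fun u => ∫ t in (0 : ℝ)..u, F t) (F y) y := fun y =>
    (hF.integral_hasStrictDerivAt 0 y).hasDerivAt
  rw [funext (steklov_eq_integral_sub (δ := δ) hF)]
  exact (((hG (z + δ)).comp_add_const z δ).sub (hG z)).div_const δ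

theorem abs_sub_steklov_le (hF : Continuous F) (hδ : 0 < δ) {z ω : ℝ}
    (h : ∀ t ∈ Ioc 0 δ, |F z - F (z + t)| ≤ ω) : |F z - steklov δ F z| ≤ ω := by
  have heq : F z - steklov δ F z = (∫ t in (0 : ℝ)..δ, (F z - F (z + t))) / δ := by
    have hFz : Continuous fun t => F (z + t) := by fun_prop
    rw [steklov, intervalIntegral.integral_sub intervalIntegrable_const
      (hFz.intervalIntegrable _ _), intervalIntegral.integral_const, smul_eq_mul, sub_zero]
    field_simp
  have hbound := intervalIntegral.norm_integral_le_of_norm_le_const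
    (f := fun t => F z - F (z + t)) (C := ω) (a := 0) (b := δ)
    (by simpa only [uIoc_of_le hδ.le, Real.norm_eq_abs] using h)
  rw [heq, abs_div, abs_of_pos hδ, div_le_iff₀ hδ]
  simpa [abs_of_pos hδ] using hbound

theorem UniformContinuous.exists_forall_abs_sub_steklov_le (hF : UniformContinuous F) {ω : ℝ}
    (hω : 0 < ω) : ∃ δ > 0, ∀ z, |F z - steklov δ F z| ≤ ω := by
  obtain ⟨δ, hδ, hFδ⟩ := Metric.uniformContinuous_iff_le.1 hF ω hω
  refine ⟨δ, hδ, fun z => abs_sub_steklov_le hF.continuous hδ fun t ht => hFδ ?_⟩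
  rw [Real.dist_eq, sub_add_cancel_left, abs_neg, abs_of_pos ht.1]
  exact ht.2

theorem sum_abs_sub_steklov_div_le {l : ℕ → ℝ} (hl : ∀ n, 0 ≤ l n) (hF : Continuous F)
    (hδ : 0 < δ) {m : ℕ} (x : Fin (m + 1) → ℝ) (β : Equiv.Perm (Fin m)) :
    ∑ j, |steklov δ F (x j.succ) - steklov δ F (x j.castSucc)| / l (β j) ≤
      (∫ t in (0 : ℝ)..δ, ∑ j, |F (x j.succ + t) - F (x j.castSucc + t)| / l (β j)) / δ := by
  have hFt : ∀ a, Continuous fun t => F (a + t) := fun a => by fun_prop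
  have hint : ∀ j : Fin m, IntervalIntegrable
      (fun t => |F (x j.succ + t) - F (x j.castSucc + t)| / l (β j)) volume 0 δ := fun j =>
    (((hFt _).sub (hFt _)).abs.div_const _).intervalIntegrable _ _
  rw [intervalIntegral.integral_finsetSum fun j _ => hint j, Finset.sum_div]
  refine Finset.sum_le_sum fun j _ => ?_
  rw [steklov, steklov, div_sub_div_same, ← intervalIntegral.integral_sub
    ((hFt _).intervalIntegrable _ _) ((hFt _).intervalIntegrable _ _), abs_div, abs_of_pos hδ,
    div_right_comm, intervalIntegral.integral_div]
  gcongr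
  · exact hl _
  · simpa only [Real.norm_eq_abs] using intervalIntegral.norm_integral_le_integral_norm
      (μ := volume) (f := fun t => F (x j.succ + t) - F (x j.castSucc + t)) hδ.le

theorem lamVar_steklov_le {l : ℕ → ℝ} (hl : ∀ n, 0 ≤ l n) (hF : Continuous F) (hδ : 0 < δ) :
    lamVar l (steklov δ F) ≤ lamVarOn l F univ := by
  rcases eq_or_ne (lamVarOn l F univ) ⊤ with hR | hR
  · exact hR ▸ le_top
  refine lamVarOn_le l _ fun m x hx _ β => ?_
  set R := (lamVarOn l F univ).toReal
  have htrans : ∀ t, ∑ j, |F (x j.succ + t) - F (x j.castSucc + t)| / l (β j) ≤ R := fun t => by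
    have := le_lamVarOn l F (hx.add_const t) (fun _ => mem_univ _) β
    rwa [← ENNReal.ofReal_sum_of_nonneg fun j _ => div_nonneg (abs_nonneg _) (hl _),
      ENNReal.ofReal_le_iff_le_toReal hR] at this
  have hcont : Continuous fun t => ∑ j, |F (x j.succ + t) - F (x j.castSucc + t)| / l (β j) := by
    fun_prop
  rw [← ENNReal.ofReal_sum_of_nonneg fun j _ => div_nonneg (abs_nonneg _) (hl _),
    ← ENNReal.ofReal_toReal hR]
  refine ENNReal.ofReal_le_ofReal ?_
  calc ∑ j, |steklov δ F (x j.succ) - steklov δ F (x j.castSucc)| / l (β j)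
      ≤ (∫ t in (0 : ℝ)..δ, ∑ j, |F (x j.succ + t) - F (x j.castSucc + t)| / l (β j)) / δ :=
        sum_abs_sub_steklov_div_le hl hF hδ x β
    _ ≤ (∫ _ in (0 : ℝ)..δ, R) / δ := by
        gcongr
        exact intervalIntegral.integral_mono_on hδ.le (hcont.intervalIntegrable _ _)
          intervalIntegrable_const fun t _ => htrans t
    _ = R := by
        rw [intervalIntegral.integral_const, smul_eq_mul, sub_zero, mul_div_cancel_left₀ _ hδ.ne']

end Steklov

theorem ContinuousOn.uniformContinuous_IccExtend {f : ℝ → ℝ} {a b : ℝ} (h : a ≤ b)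
    (hf : ContinuousOn f (Icc a b)) : UniformContinuous (IccExtend h (f ∘ Subtype.val)) :=
  (CompactSpace.uniformContinuous_of_continuous hf.domRestrict).comp
    (LipschitzWith.projIcc h).uniformContinuous

theorem Polynomial.exists_lipschitzOnWith_Icc (p : Polynomial ℝ) (a b : ℝ) :
    ∃ K, LipschitzOnWith K (fun x => p.eval x) (Icc a b) :=
  (p.contDiff_aeval 1).contDiffOn.exists_lipschitzOnWith one_ne_zero (convex_Icc a b)
    isCompact_Icc

theorem Polynomial.exists_derivative_eq (r : Polynomial ℝ) :
    ∃ q : Polynomial ℝ, Polynomial.derivative q = r := by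
  induction r using Polynomial.induction_on' with
  | add r s hr hs =>
    obtain ⟨q, rfl⟩ := hr
    obtain ⟨q', rfl⟩ := hs
    exact ⟨q + q', Polynomial.derivative_add⟩
  | monomial n a =>
    refine ⟨Polynomial.monomial (n + 1) (a / (n + 1)), ?_⟩
    rw [Polynomial.derivative_monomial, Nat.add_sub_cancel]
    push_cast
    rw [div_mul_cancel₀ a (by positivity)]

theorem exists_polynomial_eval_eq_lipschitzOnWith_sub {g g' : ℝ → ℝ} {a b : ℝ}
    (hg : ∀ z, HasDerivAt g (g' z) z) (hg' : ContinuousOn g' (Icc a b)) {η : ℝ≥0}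
    (hη : 0 < η) :
    ∃ q : Polynomial ℝ, q.eval a = g a ∧
      LipschitzOnWith η (fun x => g x - q.eval x) (Icc a b) := by
  obtain ⟨r, hr⟩ := exists_polynomial_near_of_continuousOn a b g' hg' η hη
  obtain ⟨q, hq⟩ := r.exists_derivative_eq
  refine ⟨q + Polynomial.C (g a - q.eval a), by simp, ?_⟩
  refine (convex_Icc a b).lipschitzOnWith_of_nnnorm_hasDerivWithin_le
    (f' := fun z => g' z - r.eval z) (fun z _ => ?_) fun z hz => ?_
  · have hqd := (q + Polynomial.C (g a - q.eval a)).hasDerivAt z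
    rw [Polynomial.derivative_add, Polynomial.derivative_C, add_zero, hq] at hqd
    exact ((hg z).sub hqd).hasDerivWithinAt
  · rw [← NNReal.coe_le_coe, coe_nnnorm, Real.norm_eq_abs, abs_sub_comm]
    exact (hr z hz).le

section Approximation

variable {l : ℕ → ℝ} {f : ℝ → ℝ}

theorem exists_hasDerivAt_lamNorm_sub_lt (hl : ∀ n, 0 ≤ l n) (hf : ContinuousOn f (Icc 0 1))
    (hfl : ContInLamVar l f) {ε : ℝ} (hε : 0 < ε) :
    ∃ g g' : ℝ → ℝ, Continuous g' ∧ (∀ z, HasDerivAt g (g' z) z) ∧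
      lamNorm l (fun x => f x - g x) < ENNReal.ofReal ε := by
  have hε4 : 0 < ε / 4 := by positivity
  obtain ⟨M, hM⟩ := (hfl.eventually_lt_const (ENNReal.ofReal_pos.2 hε4)).exists
  set S := ∑ i ∈ Finset.range M, 1 / l i
  have hS : 0 ≤ S := Finset.sum_nonneg fun i _ => one_div_nonneg.2 (hl i)
  set F := IccExtend zero_le_one (f ∘ Subtype.val)
  have hFc : UniformContinuous F := hf.uniformContinuous_IccExtend zero_le_one
  obtain ⟨δ, hδ, hFδ⟩ := hFc.exists_forall_abs_sub_steklov_le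
    (ω := ε / 4 / (2 * S + 1)) (by positivity)
  refine ⟨steklov δ F, fun z => (F (z + δ) - F z) / δ, by fun_prop,
    hasDerivAt_steklov hFc.continuous, ?_⟩
  have hfF : ∀ x ∈ Icc (0 : ℝ) 1, |f x - steklov δ F x| ≤ ε / 4 / (2 * S + 1) :=
    fun x hx => by simpa [F, IccExtend_of_mem _ _ hx] using hFδ x
  have hV : lamVar (fun n => l (n + M)) (steklov δ F) ≤ lamVar (fun n => l (n + M)) f :=
    (lamVar_steklov_le (fun n => hl _) hFc.continuous hδ).trans (lamVarOn_univ_IccExtend_le _ f)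
  calc lamNorm l (fun x => f x - steklov δ F x)
      ≤ ENNReal.ofReal (ε / 4 / (2 * S + 1) * (2 * S + 1)) +
          (lamVar (fun n => l (n + M)) f + lamVar (fun n => l (n + M)) (steklov δ F)) :=
        lamNorm_sub_le_of_abs_sub_le hl hfF M
    _ < ENNReal.ofReal (ε / 4) + (ENNReal.ofReal (ε / 4) + ENNReal.ofReal (ε / 4)) := by
        rw [div_mul_cancel₀ _ (by positivity)]
        exact ENNReal.add_lt_add_left ENNReal.ofReal_ne_top
          (ENNReal.add_lt_add hM (hV.trans_lt hM))
    _ ≤ ENNReal.ofReal ε := by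
        simp only [← ENNReal.ofReal_add hε4.le hε4.le,
          ← ENNReal.ofReal_add hε4.le (add_nonneg hε4.le hε4.le)]
        exact ENNReal.ofReal_le_ofReal (by linarith)

theorem exists_polynomial_lamNorm_sub_lt {g g' : ℝ → ℝ} (hl0 : 0 < l 0) (hlm : Monotone l)
    (hg : ∀ z, HasDerivAt g (g' z) z) (hg' : ContinuousOn g' (Icc 0 1)) {ε : ℝ} (hε : 0 < ε) :
    ∃ q : Polynomial ℝ, lamNorm l (fun x => g x - q.eval x) < ENNReal.ofReal ε := by
  obtain ⟨q, hq0, hq⟩ := exists_polynomial_eval_eq_lipschitzOnWith_sub hg hg'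
    (η := (ε / 2 * l 0).toNNReal) (by simp only [Real.toNNReal_pos]; positivity)
  refine ⟨q, ?_⟩
  rw [lamNorm, hq0, sub_self, abs_zero, ENNReal.ofReal_zero, add_zero]
  refine (lamVar_le_of_lipschitzOnWith hl0 hlm hq).trans_lt
    ((ENNReal.ofReal_lt_ofReal_iff hε).2 ?_)
  rw [Real.coe_toNNReal _ (by positivity), mul_div_cancel_right₀ _ hl0.ne']
  linarith

theorem continuousOn_of_forall_lamNorm_sub_lt (hl0 : 0 < l 0)
    (H : ∀ ε > 0, ∃ g : ℝ → ℝ, ContinuousOn g (Icc 0 1) ∧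
      lamNorm l (fun x => f x - g x) < ENNReal.ofReal ε) :
    ContinuousOn f (Icc 0 1) := by
  refine continuousOn_of_uniform_approx_of_continuousOn fun u hu => ?_
  obtain ⟨ε, hε, hεu⟩ := Metric.mem_uniformity_dist.1 hu
  obtain ⟨g, hg, hfg⟩ := H (ε / (l 0 + 1)) (by positivity)
  refine ⟨g, hg, fun y hy => hεu ?_⟩
  rw [Real.dist_eq]
  simpa [mul_div_cancel₀ _ (by positivity : l 0 + 1 ≠ 0)] using abs_lt_of_lamNorm_lt hl0 hfg hy

theorem contInLamVar_of_forall_lamVar_sub_lt (hl : ∀ n, 0 < l n) (hlm : Monotone l)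
    (hlt : Tendsto l atTop atTop)
    (H : ∀ ε > 0, ∃ p : ℝ → ℝ, (∃ K, LipschitzOnWith K p (Icc 0 1)) ∧
      lamVar l (fun x => f x - p x) < ENNReal.ofReal ε) :
    ContInLamVar l f := by
  refine ENNReal.tendsto_nhds_zero.2 fun ε hε => ?_
  obtain ⟨r, -, hr, hrε⟩ := ENNReal.lt_iff_exists_real_btwn.1 hε
  have hr0 : 0 < r / 2 := half_pos (ENNReal.ofReal_pos.1 hr)
  obtain ⟨p, ⟨K, hK⟩, hp⟩ := H (r / 2) hr0
  filter_upwards [(tendsto_const_nhds.div_atTop hlt).eventually_lt_const hr0] with M hM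
  calc lamVar (fun n => l (n + M)) f
      ≤ ENNReal.ofReal (r / 2) + ENNReal.ofReal (r / 2) :=
        (lamVar_shift_le_of_lipschitzOnWith hl hlm hK M).trans
          (add_le_add hp.le (ENNReal.ofReal_le_ofReal hM.le))
    _ ≤ ε := by
        rw [← ENNReal.ofReal_add hr0.le hr0.le, add_halves]
        exact hrε.le

end Approximation

/-- If `Λ` is a proper Λ-sequence, then `f : [0,1] → ℝ` is continuous, of
bounded Λ-variation and continuous in Λ-variation iff `f` can be approximated in the
`‖·‖_Λ` norm by polynomials: `CΛBV_c` is the closure of the polynomials in `‖·‖_Λ`. -/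
theorem cLamBVc_eq_closure_polynomials (l : ℕ → ℝ) (hl : IsProperLambdaSeq l)
    (f : ℝ → ℝ) :
    (ContinuousOn f (Set.Icc 0 1) ∧ lamVar l f < ⊤ ∧ ContInLamVar l f) ↔
      ∀ ε : ℝ, 0 < ε → ∃ p : Polynomial ℝ,
        lamNorm l (fun x => f x - p.eval x) < ENNReal.ofReal ε := by
  obtain ⟨⟨hlm, hl, -⟩, hlt⟩ := hl
  constructor
  · rintro ⟨hfc, -, hfl⟩ ε hε
    obtain ⟨g, g', hg', hg, hfg⟩ :=
      exists_hasDerivAt_lamNorm_sub_lt (fun n => (hl n).le) hfc hfl (half_pos hε)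
    obtain ⟨q, hgq⟩ :=
      exists_polynomial_lamNorm_sub_lt (hl 0) hlm hg hg'.continuousOn (half_pos hε)
    refine ⟨q, (lamNorm_sub_le_add (g := g) fun n => (hl n).le).trans_lt ?_⟩
    rw [← add_halves ε, ENNReal.ofReal_add (half_pos hε).le (half_pos hε).le]
    exact ENNReal.add_lt_add hfg hgq
  · intro H
    have H' : ∀ ε > 0, ∃ p : Polynomial ℝ,
        lamVar l (fun x => f x - p.eval x) < ENNReal.ofReal ε :=
      fun ε hε => (H ε hε).imp fun p hp => le_self_add.trans_lt hp
    refine ⟨continuousOn_of_forall_lamNorm_sub_lt (hl 0) fun ε hε => ?_, ?_,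
      contInLamVar_of_forall_lamVar_sub_lt hl hlm hlt fun ε hε => ?_⟩
    · obtain ⟨p, hp⟩ := H ε hε
      exact ⟨_, p.continuous.continuousOn, hp⟩
    · obtain ⟨p, hp⟩ := H' 1 one_pos
      obtain ⟨K, hK⟩ := p.exists_lipschitzOnWith_Icc 0 1
      exact (lamVar_shift_le_of_lipschitzOnWith hl hlm hK 0).trans_lt
        (ENNReal.add_lt_top.2 ⟨hp.trans ENNReal.ofReal_lt_top, ENNReal.ofReal_lt_top⟩)
    · obtain ⟨p, hp⟩ := H' ε hε
      exact ⟨_, p.exists_lipschitzOnWith_Icc 0 1, hp⟩
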